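/- If G is a finite connected simple graph without isolated vertices, then Dom has a winning strategy in the Sepy-start Disjoint Domination Game on G even in the variant where Sepy is allowed to pass on any of his turns except the very first move of the game (while Dom must make a legal move whenever one exists). -/

import Mathlib

namespace DDG

variable {V : Type*}

/-- The closed neighborhood `N[v]` of a vertex `v`. -/
def closedNbhd (G : SimpleGraph V) (v : V) : Set V := insert v (G.neighborSet v)

/-- `D` is a dominating set of `G`: every vertex has a member of `D`
in its closed neighborhood. -/
def Dominates (G : SimpleGraph V) (D : Set V) : Prop :=
  ∀ v : V, (closedNbhd G v ∩ D).Nonempty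

/-- A position of the game: the sets of purple and blue vertices. -/
structure Pos (V : Type*) where
  purple : Set V
  blue : Set V

namespace Pos

/-- The vertex class of a color (`true` = purple, `false` = blue). -/
def colorSet (p : Pos V) (c : Bool) : Set V := if c then p.purple else p.blue

/-- The position obtained by coloring vertex `v` with color `c`. -/
def play (p : Pos V) (v : V) (c : Bool) : Pos V :=
  if c then ⟨insert v p.purple, p.blue⟩ else ⟨p.purple, insert v p.blue⟩

end Pos

/-- A legal move of the Disjoint Domination Game: select an uncolored vertex `v`
and a color `c` such that some `u ∈ N[v]` is not yet dominated in color `c`. -/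
def LegalMove (G : SimpleGraph V) (p : Pos V) (v : V) (c : Bool) : Prop :=
  v ∉ p.purple ∪ p.blue ∧ ∃ u ∈ closedNbhd G v, closedNbhd G u ∩ p.colorSet c = ∅

/-- End condition ⟨s⟩: some closed neighborhood is monochromatic; Sepy wins. -/
def SepyEnd (G : SimpleGraph V) (p : Pos V) : Prop :=
  ∃ v : V, closedNbhd G v ⊆ p.purple ∨ closedNbhd G v ⊆ p.blue

/-- End condition ⟨d⟩: both color classes are dominating sets; Dom wins. -/
def DomEnd (G : SimpleGraph V) (p : Pos V) : Prop :=
  Dominates G p.purple ∧ Dominates G p.blue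

/-- `DomWins G turn p` : Dom has a winning strategy in the Disjoint Domination Game
from position `p`, where `turn = true` iff it is Dom's move. -/
inductive DomWins (G : SimpleGraph V) : Bool → Pos V → Prop
  | terminal (turn : Bool) (p : Pos V) :
      ¬ SepyEnd G p → DomEnd G p → DomWins G turn p
  | domStep (p : Pos V) (v : V) (c : Bool) :
      ¬ SepyEnd G p → ¬ DomEnd G p → LegalMove G p v c →
      DomWins G false (p.play v c) → DomWins G true p
  | sepyStep (p : Pos V) :
      ¬ SepyEnd G p → ¬ DomEnd G p →
      (∃ v c, LegalMove G p v c) →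
      (∀ v c, LegalMove G p v c → DomWins G true (p.play v c)) →
      DomWins G false p

/-- `SepyWins G turn p` : Sepy has a winning strategy in the Disjoint Domination Game
from position `p`, where `turn = true` iff it is Dom's move. -/
inductive SepyWins (G : SimpleGraph V) : Bool → Pos V → Prop
  | terminal (turn : Bool) (p : Pos V) : SepyEnd G p → SepyWins G turn p
  | sepyStep (p : Pos V) (v : V) (c : Bool) :
      ¬ SepyEnd G p → ¬ DomEnd G p → LegalMove G p v c →
      SepyWins G true (p.play v c) → SepyWins G false p
  | domStep (p : Pos V) :
      ¬ SepyEnd G p → ¬ DomEnd G p →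
      (∃ v c, LegalMove G p v c) →
      (∀ v c, LegalMove G p v c → SepyWins G false (p.play v c)) →
      SepyWins G true p

end DDG


namespace DDG
/-- `DomWinsSP G turn first p` : Dom has a winning strategy in the variant of the
Disjoint Domination Game in which Sepy may pass on any of his turns except the very
first move of the game, while Dom must move whenever a legal move exists.
Here `turn = true` iff it is Dom's move, and `first = true` iff no move of the game
has been made yet. -/
inductive DomWinsSP (G : SimpleGraph V) : Bool → Bool → Pos V → Prop
  | terminal (turn first : Bool) (p : Pos V) :
      ¬ SepyEnd G p → DomEnd G p → DomWinsSP G turn first p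
  | domStep (first : Bool) (p : Pos V) (v : V) (c : Bool) :
      ¬ SepyEnd G p → ¬ DomEnd G p → LegalMove G p v c →
      DomWinsSP G false false (p.play v c) → DomWinsSP G true first p
  | sepyStep (first : Bool) (p : Pos V) :
      ¬ SepyEnd G p → ¬ DomEnd G p →
      (∃ v c, LegalMove G p v c) →
      (∀ v c, LegalMove G p v c → DomWinsSP G true false (p.play v c)) →
      (first = false → DomWinsSP G true false p) →
      DomWinsSP G false first p
end DDG

open DDG

/-! Dom keeps every colored vertex *bichromatic*: its closed neighborhood also contains a vertex
of the other color; then no closed neighborhood is monochromatic. A move of Sepy can break this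
only at the vertex `a` he has just colored. Legality of his move and the absence of isolated
vertices show that `N[a]` is not monochromatic, so it contains an uncolored vertex, and Dom
repairs `a` by giving that vertex the other color. If nothing needs repairing (Sepy passed, or
`a` is bichromatic already), Dom colors a vertex having the other color in its closed
neighborhood: by connectivity such a legal move exists as long as some color class is not
dominating. Every move colors a new vertex, so the game ends, and only with Dom's win. -/

namespace DDG

variable {V : Type*} {G : SimpleGraph V} {p : Pos V}

lemma mem_closedNbhd {u v : V} : u ∈ closedNbhd G v ↔ u = v ∨ G.Adj v u := Iff.rfl

lemma self_mem_closedNbhd (v : V) : v ∈ closedNbhd G v := Set.mem_insert _ _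

lemma mem_closedNbhd_comm {u v : V} : u ∈ closedNbhd G v ↔ v ∈ closedNbhd G u := by
  simp only [mem_closedNbhd, eq_comm, G.adj_comm]

namespace Pos

lemma mem_purple_union_blue {v : V} : v ∈ p.purple ∪ p.blue ↔ ∃ c, v ∈ p.colorSet c := by
  simp [colorSet, or_comm]

lemma mem_colorSet_play {v w : V} {c c' : Bool} :
    w ∈ (p.play v c).colorSet c' ↔ w ∈ p.colorSet c' ∨ (w = v ∧ c' = c) := by
  cases c <;> cases c' <;> simp [play, colorSet] <;> tauto

lemma colorSet_subset_play (v : V) (c c' : Bool) : p.colorSet c' ⊆ (p.play v c).colorSet c' :=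
  fun _ hw => mem_colorSet_play.2 (Or.inl hw)

lemma play_purple_union_blue (v : V) (c : Bool) :
    (p.play v c).purple ∪ (p.play v c).blue = insert v (p.purple ∪ p.blue) := by
  cases c <;> simp [play, Set.insert_union, Set.union_insert]

lemma ncard_compl_play_lt [Finite V] {v : V} (hv : v ∉ p.purple ∪ p.blue) (c : Bool) :
    ((p.play v c).purple ∪ (p.play v c).blue)ᶜ.ncard < (p.purple ∪ p.blue)ᶜ.ncard := by
  rw [play_purple_union_blue, Set.insert_eq, Set.compl_union, Set.inter_comm, ← Set.sdiff_eq]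
  exact Set.ncard_sdiff_singleton_lt_of_mem hv

def ColorsDisjoint (p : Pos V) : Prop := Disjoint p.purple p.blue

lemma ColorsDisjoint.notMem_colorSet_not (hd : p.ColorsDisjoint) {v : V} {c : Bool}
    (hv : v ∈ p.colorSet c) : v ∉ p.colorSet (!c) := by
  cases c
  · exact fun h => hd.notMem_of_mem_left h hv
  · exact hd.notMem_of_mem_left hv

lemma ColorsDisjoint.play (hd : p.ColorsDisjoint) {v : V} (hv : v ∉ p.purple ∪ p.blue)
    (c : Bool) : (p.play v c).ColorsDisjoint := by
  simp only [Set.mem_union, not_or] at hv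
  cases c
  · exact Set.disjoint_insert_right.2 ⟨hv.1, hd⟩
  · exact Set.disjoint_insert_left.2 ⟨hv.2, hd⟩

end Pos

open Pos

lemma sepyEnd_iff : SepyEnd G p ↔ ∃ v c, closedNbhd G v ⊆ p.colorSet c := by
  simp [SepyEnd, colorSet, or_comm]

lemma domEnd_iff : DomEnd G p ↔ ∀ v c, (closedNbhd G v ∩ p.colorSet c).Nonempty := by
  simp [DomEnd, Dominates, colorSet, forall_and, and_comm]

lemma mem_colorSet_not_of_inter_eq_empty {x y : V} {c : Bool}
    (hx : closedNbhd G x ∩ p.colorSet c = ∅) (hy : y ∈ closedNbhd G x)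
    (hyc : y ∈ p.purple ∪ p.blue) : y ∈ p.colorSet (!c) := by
  obtain ⟨c', hc'⟩ := mem_purple_union_blue.1 hyc
  have hne : c' ≠ c := by
    rintro rfl
    exact (Set.eq_empty_iff_forall_notMem.1 hx y) ⟨hy, hc'⟩
  rwa [← Bool.eq_not_iff.2 hne]

lemma exists_uncolored_of_inter_eq_empty (hse : ¬ SepyEnd G p) {x : V} {c : Bool}
    (hx : closedNbhd G x ∩ p.colorSet c = ∅) : ∃ u ∈ closedNbhd G x, u ∉ p.purple ∪ p.blue := by
  by_contra! h
  exact hse (sepyEnd_iff.2 ⟨x, !c, fun y hy => mem_colorSet_not_of_inter_eq_empty hx hy (h y hy)⟩)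

lemma exists_legalMove (hse : ¬ SepyEnd G p) (hde : ¬ DomEnd G p) : ∃ v c, LegalMove G p v c := by
  simp only [domEnd_iff, not_forall, Set.not_nonempty_iff_eq_empty] at hde
  obtain ⟨x, c, hx⟩ := hde
  obtain ⟨u, hu, hu_unc⟩ := exists_uncolored_of_inter_eq_empty hse hx
  exact ⟨u, c, hu_unc, x, mem_closedNbhd_comm.1 hu, hx⟩

def BichromaticAt (G : SimpleGraph V) (p : Pos V) (v : V) : Prop :=
  ∀ c, v ∈ p.colorSet c → (closedNbhd G v ∩ p.colorSet (!c)).Nonempty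

lemma not_sepyEnd_of_bichromatic (hd : p.ColorsDisjoint) (hk : ∀ v, BichromaticAt G p v) :
    ¬ SepyEnd G p := by
  rw [sepyEnd_iff]
  rintro ⟨v, c, hsub⟩
  obtain ⟨u, hu, huc⟩ := hk v c (hsub (self_mem_closedNbhd v))
  exact hd.notMem_colorSet_not (hsub hu) huc

lemma BichromaticAt.play_of_ne {v w : V} (h : BichromaticAt G p w) (hw : w ≠ v) (c : Bool) :
    BichromaticAt G (p.play v c) w := by
  intro c' hc'
  rcases mem_colorSet_play.1 hc' with hc' | ⟨rfl, -⟩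
  · exact (h c' hc').mono (Set.inter_subset_inter_right _ (colorSet_subset_play _ _ _))
  · exact absurd rfl hw

lemma bichromaticAt_play_self {v : V} (hv : v ∉ p.purple ∪ p.blue) {c : Bool}
    (h : (closedNbhd G v ∩ p.colorSet (!c)).Nonempty) : BichromaticAt G (p.play v c) v := by
  intro c' hc'
  rcases mem_colorSet_play.1 hc' with hc' | ⟨-, rfl⟩
  · exact absurd (mem_purple_union_blue.2 ⟨c', hc'⟩) hv
  · exact h.mono (Set.inter_subset_inter_right _ (colorSet_subset_play _ _ _))

lemma not_sepyEnd_play (hiso : ∀ v : V, ∃ u, G.Adj v u) (hd : p.ColorsDisjoint)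
    (hk : ∀ v, BichromaticAt G p v) {v : V} {c : Bool} (hleg : LegalMove G p v c) :
    ¬ SepyEnd G (p.play v c) := by
  obtain ⟨hv, u, hu, hu_empty⟩ := hleg
  rw [sepyEnd_iff]
  rintro ⟨w, c', hsub⟩
  by_cases hwv : w = v
  · subst hwv
    have hc' : c' = c := by
      rcases mem_colorSet_play.1 (hsub (self_mem_closedNbhd w)) with h | ⟨-, h⟩
      · exact absurd (mem_purple_union_blue.2 ⟨c', h⟩) hv
      · exact h
    subst hc'
    -- `N[u]` contains no old vertex of this color, so `w` is the only vertex of `N[w]` in `N[u]`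
    have hsingle : ∀ q ∈ closedNbhd G w, q ∈ closedNbhd G u → q = w := by
      intro q hq hqu
      rcases mem_colorSet_play.1 (hsub hq) with h | ⟨h, -⟩
      · exact absurd ⟨hqu, h⟩ (Set.eq_empty_iff_forall_notMem.1 hu_empty q)
      · exact h
    have huw : u = w := hsingle u hu (self_mem_closedNbhd u)
    subst huw
    obtain ⟨z, hz⟩ := hiso u
    exact G.ne_of_adj hz (hsingle z (Or.inr hz) (Or.inr hz)).symm
  · rcases mem_colorSet_play.1 (hsub (self_mem_closedNbhd w)) with hw | ⟨rfl, -⟩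
    · obtain ⟨q, hq, hqc⟩ := hk w c' hw
      exact (hd.play hv c).notMem_colorSet_not (hsub hq) (colorSet_subset_play _ _ _ hqc)
    · exact hwv rfl

lemma exists_legalMove_next_to_other_color (hconn : G.Connected)
    (hk : ∀ v, BichromaticAt G p v) (hne : (p.purple ∪ p.blue).Nonempty) (hde : ¬ DomEnd G p) :
    ∃ v c, LegalMove G p v c ∧ (closedNbhd G v ∩ p.colorSet (!c)).Nonempty := by
  simp only [domEnd_iff, not_forall, Set.not_nonempty_iff_eq_empty] at hde
  obtain ⟨x, c, hx⟩ := hde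
  have hx_unc : x ∉ p.purple ∪ p.blue := by
    intro hxc
    obtain ⟨y, hy, hyc⟩ :=
      hk x _ (mem_colorSet_not_of_inter_eq_empty hx (self_mem_closedNbhd x) hxc)
    rw [Bool.not_not] at hyc
    exact Set.eq_empty_iff_forall_notMem.1 hx y ⟨hy, hyc⟩
  by_cases hx_near : (closedNbhd G x ∩ (p.purple ∪ p.blue)).Nonempty
  · obtain ⟨y, hy, hyc⟩ := hx_near
    exact ⟨x, c, ⟨hx_unc, x, self_mem_closedNbhd x, hx⟩,
      y, hy, mem_colorSet_not_of_inter_eq_empty hx hy hyc⟩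
  -- Otherwise walk from `x` to a colored vertex; stop at the first vertex `w` seeing a color.
  obtain ⟨z, hz⟩ := hne
  let far : Set V := {u | closedNbhd G u ∩ (p.purple ∪ p.blue) = ∅}
  have hz_far : z ∉ far := fun h =>
    Set.eq_empty_iff_forall_notMem.1 h z ⟨self_mem_closedNbhd z, hz⟩
  obtain ⟨⟨⟨t, w⟩, htw⟩, -, ht, hw⟩ := (hconn.preconnected x z).some.exists_boundary_dart far
    (Set.not_nonempty_iff_eq_empty.1 hx_near) hz_far
  obtain ⟨y, hy, hyc⟩ := Set.nonempty_iff_ne_empty.2 hw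
  obtain ⟨c', hyc'⟩ := mem_purple_union_blue.1 hyc
  have hwt : w ∈ closedNbhd G t := Or.inr htw
  refine ⟨w, !c', ⟨fun hwc => ?_, t, mem_closedNbhd_comm.1 hwt, ?_⟩, y, hy, ?_⟩
  · exact Set.eq_empty_iff_forall_notMem.1 ht _ ⟨hwt, hwc⟩
  · exact Set.eq_empty_of_subset_empty (ht ▸ Set.inter_subset_inter_right _
      (fun q hq => mem_purple_union_blue.2 ⟨_, hq⟩))
  · rwa [Bool.not_not]

lemma exists_repairing_move (hse : ¬ SepyEnd G p) {a : V} (hk : ∀ v ≠ a, BichromaticAt G p v)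
    {c : Bool} (ha : a ∈ p.colorSet c) (ha_empty : closedNbhd G a ∩ p.colorSet (!c) = ∅) :
    ∃ u, LegalMove G p u (!c) ∧ ∀ v, BichromaticAt G (p.play u (!c)) v := by
  obtain ⟨u, hu, hu_unc⟩ := exists_uncolored_of_inter_eq_empty hse ha_empty
  refine ⟨u, ⟨hu_unc, a, mem_closedNbhd_comm.1 hu, ha_empty⟩, fun v => ?_⟩
  by_cases hvu : v = u
  · subst hvu
    exact bichromaticAt_play_self hu_unc ⟨a, mem_closedNbhd_comm.1 hu, by rwa [Bool.not_not]⟩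
  by_cases hva : v = a
  · subst hva
    intro c' hc'
    rcases mem_colorSet_play.1 hc' with hc' | ⟨h, -⟩
    · have hcc' : c' = c := by
        by_contra hne
        rw [Bool.eq_not_iff.2 hne] at hc'
        exact Set.eq_empty_iff_forall_notMem.1 ha_empty _ ⟨self_mem_closedNbhd _, hc'⟩
      subst hcc'
      exact ⟨u, hu, mem_colorSet_play.2 (Or.inr ⟨rfl, rfl⟩)⟩
    · exact absurd h hvu
  · exact (hk v hva).play_of_ne hvu _

structure DomTurnInvariant (G : SimpleGraph V) (p : Pos V) : Prop where
  colorsDisjoint : p.ColorsDisjoint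
  bichromatic_off : ∃ a, ∀ v ≠ a, BichromaticAt G p v
  not_sepyEnd : ¬ SepyEnd G p
  nonempty : (p.purple ∪ p.blue).Nonempty

lemma DomTurnInvariant.exists_bichromatic_move (hconn : G.Connected)
    (hinv : DomTurnInvariant G p) (hde : ¬ DomEnd G p) :
    ∃ v c, LegalMove G p v c ∧ ∀ w, BichromaticAt G (p.play v c) w := by
  obtain ⟨a, hk⟩ := hinv.bichromatic_off
  by_cases ha : BichromaticAt G p a
  · have hk' : ∀ v, BichromaticAt G p v := by
      intro v
      by_cases hva : v = a
      · exact hva ▸ ha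
      · exact hk v hva
    obtain ⟨v, c, hleg, hgood⟩ := exists_legalMove_next_to_other_color hconn hk' hinv.nonempty hde
    refine ⟨v, c, hleg, fun w => ?_⟩
    by_cases hwv : w = v
    · exact hwv ▸ bichromaticAt_play_self hleg.1 hgood
    · exact (hk' w).play_of_ne hwv c
  · simp only [BichromaticAt, not_forall, Set.not_nonempty_iff_eq_empty] at ha
    obtain ⟨c, hac, ha_empty⟩ := ha
    obtain ⟨u, hleg, hgood⟩ := exists_repairing_move hinv.not_sepyEnd hk hac ha_empty
    exact ⟨u, !c, hleg, hgood⟩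

lemma DomTurnInvariant.of_bichromatic (hd : p.ColorsDisjoint) (hk : ∀ v, BichromaticAt G p v)
    (hne : (p.purple ∪ p.blue).Nonempty) : DomTurnInvariant G p :=
  ⟨hd, ⟨hne.some, fun v _ => hk v⟩, not_sepyEnd_of_bichromatic hd hk, hne⟩

lemma domTurnInvariant_play (hiso : ∀ v : V, ∃ u, G.Adj v u) (hd : p.ColorsDisjoint)
    (hk : ∀ v, BichromaticAt G p v) {v : V} {c : Bool} (hleg : LegalMove G p v c) :
    DomTurnInvariant G (p.play v c) where
  colorsDisjoint := hd.play hleg.1 c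
  bichromatic_off := ⟨v, fun w hw => (hk w).play_of_ne hw c⟩
  not_sepyEnd := not_sepyEnd_play hiso hd hk hleg
  nonempty := by simp [play_purple_union_blue]

lemma domWinsSP_sepy_turn (hiso : ∀ v : V, ∃ u, G.Adj v u) {first : Bool}
    (hd : p.ColorsDisjoint) (hk : ∀ v, BichromaticAt G p v)
    (hpass : first = false → DomWinsSP G true false p)
    (hmove : ∀ v c, LegalMove G p v c → DomTurnInvariant G (p.play v c) →
      DomWinsSP G true false (p.play v c)) :
    DomWinsSP G false first p := by
  have hse := not_sepyEnd_of_bichromatic hd hk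
  by_cases hde : DomEnd G p
  · exact .terminal _ _ _ hse hde
  exact .sepyStep first p hse hde (exists_legalMove hse hde)
    (fun v c hleg => hmove v c hleg (domTurnInvariant_play hiso hd hk hleg)) hpass

theorem domWinsSP_dom_turn [Finite V] (hconn : G.Connected) (hiso : ∀ v : V, ∃ u, G.Adj v u)
    (hinv : DomTurnInvariant G p) : DomWinsSP G true false p := by
  induction h : (p.purple ∪ p.blue)ᶜ.ncard using Nat.strong_induction_on generalizing p with
  | _ n ih =>
    by_cases hde : DomEnd G p
    · exact .terminal _ _ _ hinv.not_sepyEnd hde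
    obtain ⟨v, c, hleg, hk⟩ := hinv.exists_bichromatic_move hconn hde
    have hlt := h ▸ ncard_compl_play_lt hleg.1 c
    have hd := hinv.colorsDisjoint.play hleg.1 c
    refine .domStep false p v c hinv.not_sepyEnd hde hleg
      (domWinsSP_sepy_turn hiso hd hk ?pass ?move)
    case pass =>
      exact fun _ => ih _ hlt (.of_bichromatic hd hk (by simp [play_purple_union_blue])) rfl
    case move =>
      exact fun w c' hleg' hinv' => ih _ ((ncard_compl_play_lt hleg'.1 c').trans hlt) hinv' rfl

end DDG

/-- Theorem 3″ of the paper: on every finite connected isolate-free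
graph, Dom has a winning strategy in the Sepy-start Disjoint Domination Game even in
the variant in which Sepy may pass on any of his turns except the very first move of
the game (while Dom must move whenever a legal move exists). -/
theorem statement9 {V : Type*} [Fintype V] (G : SimpleGraph V)
    (hconn : G.Connected) (hiso : ∀ v : V, ∃ u : V, G.Adj v u) :
    DomWinsSP G false true ⟨∅, ∅⟩ := by
  have hd : (⟨∅, ∅⟩ : Pos V).ColorsDisjoint := disjoint_bot_left
  have hk : ∀ v, BichromaticAt G (⟨∅, ∅⟩ : Pos V) v := by
    intro v c hv
    cases c <;> simp [Pos.colorSet] at hv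
  exact domWinsSP_sepy_turn hiso hd hk nofun
    (fun _ _ _ hinv => domWinsSP_dom_turn hconn hiso hinv)
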